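/- arXiv:2011.00412 — 5 statements merged into one kernel-verified Lean document; each statement's English description precedes it below -/
import Mathlib

section
/- Let V be a Banach space, v ∈ V with ‖v‖ ≤ 1, and δ : V ⊕_1 V → V a linear contraction with δ(v,v) = v, where ‖(v₁,v₂)‖ = (1/2)(‖v₁‖+‖v₂‖). Then there is at most one bounded linear map θ : L^1[0,1] → V satisfying θ(1) = v and θ(γ(f,g)) = δ(θ(f), θ(g)) for all f, g ∈ L^1[0,1], where γ is the juxtaposition map. -/
/-!
`θ` and `θ'` agree on the closed subspace `K = ker (θ - θ')`, which contains `1` and is stable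
under `γ`. On indicators of half-lines, `γ (𝟙_{(-∞,t)}, 0) = 𝟙_{(-∞,t/2)}` and
`γ (1, 𝟙_{(-∞,t)}) = 𝟙_{(-∞,(t+1)/2)}` for `t ∈ [0, 1]`, so `K` contains `𝟙_{(-∞,t)}` for every
dyadic `t`, hence for every `t` since `t ↦ 𝟙_{(-∞,t)}` is continuous into `L¹[0,1]`. Half-lines
form a π-system generating the Borel sets, so a Dynkin-system argument puts every indicator of a
measurable set in `K`, and these span a dense subspace of `L¹[0,1]`.
-/

open MeasureTheory

local notation "μ01" => MeasureTheory.volume.restrict (Set.Icc (0:ℝ) 1)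

open Set Filter Topology Measure
open scoped ENNReal symmDiff

section IndicatorConstLp

variable {α E : Type*} [MeasurableSpace α] {μ : Measure α} [NormedAddCommGroup E] {p : ℝ≥0∞}

theorem indicatorConstLp_congr_ae {s t : Set α} {hs : MeasurableSet s} {ht : MeasurableSet t}
    {hμs : μ s ≠ ∞} {hμt : μ t ≠ ∞} {c : E} (h : s =ᵐ[μ] t) :
    indicatorConstLp p hs hμs c = indicatorConstLp p ht hμt c :=
  Lp.ext <| indicatorConstLp_coeFn.trans <|
    (indicator_ae_eq_of_ae_eq_set h).trans indicatorConstLp_coeFn.symm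

theorem indicatorConstLp_eq_smul_indicatorConstLp_one {𝕜 : Type*} [NormedField 𝕜] {s : Set α}
    {hs : MeasurableSet s} {hμs : μ s ≠ ∞} (c : 𝕜) :
    indicatorConstLp p hs hμs c = c • indicatorConstLp p hs hμs (1 : 𝕜) := by
  refine Lp.ext ?_
  filter_upwards [indicatorConstLp_coeFn (p := p) (hs := hs) (hμs := hμs) (c := c),
    Lp.coeFn_smul c (indicatorConstLp p hs hμs (1 : 𝕜)),
    indicatorConstLp_coeFn (p := p) (hs := hs) (hμs := hμs) (c := (1 : 𝕜))] with x h₁ h₂ h₃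
  rw [h₁, h₂, Pi.smul_apply, h₃]
  by_cases hx : x ∈ s <;> simp [hx]

/-- The sets whose indicators lie in a closed subgroup of `Lᵖ` form a Dynkin system. -/
theorem indicatorConstLp_mem_of_isPiSystem [IsFiniteMeasure μ] [Fact (1 ≤ p)] (hp : p ≠ ∞)
    {K : AddSubgroup (Lp E p μ)} (hK : IsClosed (K : Set (Lp E p μ))) {c : E}
    {S : Set (Set α)} (hgen : ‹MeasurableSpace α› = MeasurableSpace.generateFrom S)
    (hS : IsPiSystem S)
    (huniv : indicatorConstLp p MeasurableSet.univ (measure_ne_top μ _) c ∈ K)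
    (hSK : ∀ s ∈ S, ∀ hs : MeasurableSet s, indicatorConstLp p hs (measure_ne_top μ s) c ∈ K)
    {s : Set α} (hs : MeasurableSet s) :
    indicatorConstLp p hs (measure_ne_top μ s) c ∈ K := by
  induction s, hs using MeasurableSpace.induction_on_inter hgen hS with
  | empty => simp
  | basic t ht => exact hSK t ht _
  | compl t ht iht =>
    have hsplit := indicatorConstLp_disjoint_union (p := p) ht ht.compl (measure_ne_top μ _)
      (measure_ne_top μ _) disjoint_compl_right c
    rw [indicatorConstLp_congr_ae (ht := .univ) (hμt := measure_ne_top μ _)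
      (EventuallyEq.of_eq (union_compl_self t))] at hsplit
    have := K.sub_mem huniv iht
    rwa [hsplit, add_sub_cancel_left] at this
  | iUnion f hdisj hf ihf =>
    have hacc : ∀ n, MeasurableSet (accumulate f n) := fun n =>
      MeasurableSet.iUnion fun i => MeasurableSet.iUnion fun _ => hf i
    have hmem : ∀ n, indicatorConstLp p (hacc n) (measure_ne_top μ _) c ∈ K := by
      suffices ∀ n (h : MeasurableSet (accumulate f n)),
          indicatorConstLp p h (measure_ne_top μ _) c ∈ K from fun n => this n _
      intro n
      induction n with
      | zero => simpa only [accumulate_zero_nat] using fun _ => ihf 0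
      | succ n ih =>
        simp only [accumulate_succ]
        intro _
        rw [indicatorConstLp_disjoint_union (hacc n) (hf _) (measure_ne_top μ _)
          (measure_ne_top μ _) (disjoint_accumulate hdisj n.lt_succ_self)]
        exact K.add_mem (ih _) (ihf _)
    refine hK.mem_of_tendsto (b := atTop) (tendsto_indicatorConstLp_set hp ?_)
      (Eventually.of_forall hmem)
    have hlim : Tendsto (fun n => μ (⋃ i, f i) - μ (accumulate f n)) atTop
        (𝓝 (μ (⋃ i, f i) - μ (⋃ i, f i))) :=
      ENNReal.Tendsto.sub tendsto_const_nhds tendsto_measure_iUnion_accumulate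
        (Or.inl (measure_ne_top μ _))
    rw [tsub_self] at hlim
    refine hlim.congr fun n => ?_
    rw [symmDiff_of_le (accumulate_subset_iUnion n),
      measure_sdiff (accumulate_subset_iUnion n) (hacc n).nullMeasurableSet (measure_ne_top μ _)]

theorem Submodule.eq_top_of_indicatorConstLp_one_mem {𝕜 : Type*} [RCLike 𝕜] [Fact (1 ≤ p)]
    (hp : p ≠ ∞) (K : Submodule 𝕜 (Lp 𝕜 p μ)) (hK : IsClosed (K : Set (Lp 𝕜 p μ)))
    (h : ∀ s (hs : MeasurableSet s) (hμs : μ s ≠ ∞), indicatorConstLp p hs hμs (1 : 𝕜) ∈ K) :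
    K = ⊤ := by
  refine Submodule.eq_top_iff'.2 fun f => ?_
  induction f using Lp.induction hp with
  | indicatorConst c hs hμs =>
    rw [Lp.simpleFunc.coe_indicatorConst, indicatorConstLp_eq_smul_indicatorConstLp_one]
    exact K.smul_mem c (h _ hs _)
  | add _ _ _ hf hg => exact K.add_mem hf hg
  | isClosed => exact hK

end IndicatorConstLp

/-- Such a set contains every dyadic rational of `[0, 1]`, and these are dense. -/
theorem Icc_subset_of_isClosed_of_half_mem {T : Set ℝ} (hT : IsClosed T) (h₀ : (0 : ℝ) ∈ T)
    (h₁ : (1 : ℝ) ∈ T) (hleft : ∀ t ∈ Icc (0 : ℝ) 1, t ∈ T → t / 2 ∈ T)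
    (hright : ∀ t ∈ Icc (0 : ℝ) 1, t ∈ T → (t + 1) / 2 ∈ T) :
    Icc 0 1 ⊆ T := by
  have hdyadic : ∀ n k : ℕ, k ≤ 2 ^ n → (k : ℝ) / 2 ^ n ∈ T := by
    intro n
    induction n with
    | zero => intro k hk; interval_cases k <;> simpa
    | succ n ih =>
      intro k hk
      have hIcc : ∀ j : ℕ, j ≤ 2 ^ n → (j : ℝ) / 2 ^ n ∈ Icc (0 : ℝ) 1 := fun j hj =>
        ⟨by positivity, div_le_one_of_le₀ (by exact_mod_cast hj) (by positivity)⟩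
      rcases le_or_gt k (2 ^ n) with hk' | hk'
      · convert hleft _ (hIcc k hk') (ih k hk') using 1
        ring
      · obtain ⟨j, rfl⟩ : ∃ j, k = j + 2 ^ n := ⟨k - 2 ^ n, by omega⟩
        have hj : j ≤ 2 ^ n := by omega
        convert hright _ (hIcc j hj) (ih j hj) using 1
        field_simp
        push_cast
        ring
  intro t ht
  have hlim : Tendsto (fun n : ℕ => (⌊t * 2 ^ n⌋₊ : ℝ) / 2 ^ n) atTop (𝓝 t) :=
    (tendsto_nat_floor_mul_div_atTop ht.1).comp (tendsto_pow_atTop_atTop_of_one_lt one_lt_two)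
  refine hT.mem_of_tendsto hlim (Eventually.of_forall fun n => hdyadic n _ ?_)
  exact Nat.floor_le_of_le (by simpa using mul_le_of_le_one_left (pow_nonneg zero_le_two n) ht.2)

theorem continuous_indicatorConstLp_Iio {E : Type*} [NormedAddCommGroup E] {p : ℝ≥0∞}
    [Fact (1 ≤ p)] (hp : p ≠ ∞) (c : E) :
    Continuous fun t : ℝ => indicatorConstLp (μ := μ01) p (measurableSet_Iio (a := t))
      (measure_ne_top _ _) c := by
  refine continuous_indicatorConstLp_set hp fun t => ?_
  have hbound : ∀ s, μ01 (Iio s ∆ Iio t) ≤ ENNReal.ofReal |s - t| := fun s => calc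
    μ01 (Iio s ∆ Iio t) ≤ volume (Ico (min s t) (max s t)) := by
      refine (restrict_apply_le _ _).trans (measure_mono fun x hx => ?_)
      rcases hx with ⟨hxs, hxt⟩ | ⟨hxt, hxs⟩ <;> simp_all
    _ = ENNReal.ofReal |s - t| := by rw [Real.volume_Ico, max_sub_min_eq_abs']
  have hcont : Tendsto (fun s => ENNReal.ofReal |s - t|) (𝓝 t) (𝓝 0) := by
    have : Continuous fun s : ℝ => ENNReal.ofReal |s - t| :=
      ENNReal.continuous_ofReal.comp (by fun_prop)
    simpa using this.tendsto t
  exact tendsto_of_tendsto_of_tendsto_of_le_of_le tendsto_const_nhds hcont (fun _ => bot_le) hbound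

theorem indicatorConstLp_Iio_of_nonpos {E : Type*} [NormedAddCommGroup E] {p : ℝ≥0∞} {t : ℝ}
    (ht : t ≤ 0) (c : E) :
    indicatorConstLp (μ := μ01) p (measurableSet_Iio (a := t)) (measure_ne_top _ _) c = 0 := by
  have hnull : Iio t =ᵐ[μ01] (∅ : Set ℝ) := by
    rw [ae_eq_empty, Measure.restrict_apply measurableSet_Iio]
    exact measure_mono_null (fun x hx => not_lt.2 hx.2.1 (hx.1.trans_le ht)) measure_empty
  simp [indicatorConstLp_congr_ae hnull]

theorem indicatorConstLp_Iio_of_one_le {E : Type*} [NormedAddCommGroup E] {p : ℝ≥0∞} {t : ℝ}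
    (ht : 1 ≤ t) (c : E) :
    indicatorConstLp (μ := μ01) p (measurableSet_Iio (a := t)) (measure_ne_top _ _) c =
      indicatorConstLp p MeasurableSet.univ (measure_ne_top _ _) c := by
  refine indicatorConstLp_congr_ae (ae_eq_univ.2 ?_)
  rw [Measure.restrict_apply measurableSet_Iio.compl]
  refine measure_mono_null (fun x hx => ?_) (Real.volume_singleton (a := 1))
  exact le_antisymm hx.2.2 (ht.trans (not_lt.1 hx.1))

theorem MeasureTheory.Measure.QuasiMeasurePreserving.ae_mem_imp_eq_comp {α β : Type*}
    [MeasurableSpace α] {μ : Measure α} {φ : α → α} (hφ : QuasiMeasurePreserving φ μ μ) {A : Set α}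
    (hA : MeasurableSet A) {f g : α → β} (h : f =ᵐ[μ.restrict A] g) :
    ∀ᵐ x ∂μ.restrict A, φ x ∈ A → f (φ x) = g (φ x) :=
  ae_restrict_of_ae (hφ.ae ((ae_restrict_iff' hA).1 h))

section Juxtaposition

variable {𝕜 : Type*} [RCLike 𝕜] {p : ℝ≥0∞}

def juxtaposeSet (s t : Set ℝ) : Set ℝ :=
  Iio (1 / 2) ∩ (fun x => 2 * x) ⁻¹' s ∪ Ici (1 / 2) ∩ (fun x => 2 * x - 1) ⁻¹' t

theorem measurableSet_juxtaposeSet {s t : Set ℝ} (hs : MeasurableSet s) (ht : MeasurableSet t) :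
    MeasurableSet (juxtaposeSet s t) :=
  (measurableSet_Iio.inter (measurable_const_mul 2 hs)).union
    (measurableSet_Ici.inter (((measurable_const_mul 2).sub_const 1) ht))

theorem mem_juxtaposeSet_of_lt {s t : Set ℝ} {x : ℝ} (hx : x < 1 / 2) :
    x ∈ juxtaposeSet s t ↔ 2 * x ∈ s := by
  simp only [juxtaposeSet, mem_union, mem_inter_iff, mem_Iio, mem_Ici, mem_preimage, hx,
    not_le.2 hx, true_and, false_and, or_false]

theorem mem_juxtaposeSet_of_ge {s t : Set ℝ} {x : ℝ} (hx : 1 / 2 ≤ x) :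
    x ∈ juxtaposeSet s t ↔ 2 * x - 1 ∈ t := by
  simp only [juxtaposeSet, mem_union, mem_inter_iff, mem_Iio, mem_Ici, mem_preimage, hx,
    not_lt.2 hx, true_and, false_and, false_or]

theorem juxtaposeSet_Iio_Iio_of_le {a b : ℝ} (ha : a ≤ 1) (hb : b ≤ 0) :
    juxtaposeSet (Iio a) (Iio b) = Iio (a / 2) := by
  ext x
  by_cases hx : x < 1 / 2
  · rw [mem_juxtaposeSet_of_lt hx, mem_Iio, mem_Iio]
    constructor <;> intro h <;> linarith
  · rw [mem_juxtaposeSet_of_ge (not_lt.1 hx), mem_Iio, mem_Iio]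
    constructor <;> intro h <;> linarith

theorem juxtaposeSet_Iio_Iio_of_ge {a b : ℝ} (ha : 1 ≤ a) (hb : 0 ≤ b) :
    juxtaposeSet (Iio a) (Iio b) = Iio ((b + 1) / 2) := by
  ext x
  by_cases hx : x < 1 / 2
  · rw [mem_juxtaposeSet_of_lt hx, mem_Iio, mem_Iio]
    constructor <;> intro h <;> linarith
  · rw [mem_juxtaposeSet_of_ge (not_lt.1 hx), mem_Iio, mem_Iio]
    constructor <;> intro h <;> linarith

variable (γ : Lp 𝕜 p μ01 × Lp 𝕜 p μ01 → Lp 𝕜 p μ01)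

theorem juxtapose_indicatorConstLp
    (hγ : ∀ fg : Lp 𝕜 p μ01 × Lp 𝕜 p μ01,
      ⇑(γ fg) =ᵐ[μ01] fun x : ℝ => if x < 1/2 then fg.1 (2 * x) else fg.2 (2 * x - 1))
    {s t : Set ℝ} (hs : MeasurableSet s) (ht : MeasurableSet t) (c : 𝕜) :
    γ (indicatorConstLp p hs (measure_ne_top _ _) c, indicatorConstLp p ht (measure_ne_top _ _) c)
      = indicatorConstLp p (measurableSet_juxtaposeSet hs ht) (measure_ne_top _ _) c := by
  have hdouble : QuasiMeasurePreserving (fun x : ℝ => 2 * x) :=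
    quasiMeasurePreserving_smul volume two_ne_zero
  have hshift : QuasiMeasurePreserving (fun x : ℝ => 2 * x - 1) :=
    (measurePreserving_sub_right volume 1).quasiMeasurePreserving.comp hdouble
  have hfs : ⇑(indicatorConstLp p hs (measure_ne_top μ01 s) c) =ᵐ[μ01] s.indicator fun _ => c :=
    indicatorConstLp_coeFn
  have hft : ⇑(indicatorConstLp p ht (measure_ne_top μ01 t) c) =ᵐ[μ01] t.indicator fun _ => c :=
    indicatorConstLp_coeFn
  classical
  refine Lp.ext ?_
  filter_upwards [hγ _, hdouble.ae_mem_imp_eq_comp measurableSet_Icc hfs,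
    hshift.ae_mem_imp_eq_comp measurableSet_Icc hft,
    indicatorConstLp_coeFn (p := p) (hs := measurableSet_juxtaposeSet hs ht)
      (hμs := measure_ne_top μ01 _) (c := c),
    ae_restrict_mem measurableSet_Icc] with x hγx hleft hright hjux ⟨hx₀, hx₁⟩
  rw [hγx, hjux]
  by_cases hx : x < 1 / 2
  · rw [if_pos hx, hleft ⟨by linarith, by linarith⟩]
    simp only [Set.indicator_apply, mem_juxtaposeSet_of_lt hx]
  · rw [if_neg hx, hright ⟨by linarith, by linarith⟩]
    simp only [Set.indicator_apply, mem_juxtaposeSet_of_ge (not_lt.1 hx)]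

variable [Fact (1 ≤ p)]

theorem indicatorConstLp_Iio_mem_of_juxtapose_mem (hp : p ≠ ∞) (K : Submodule 𝕜 (Lp 𝕜 p μ01))
    (hK : IsClosed (K : Set (Lp 𝕜 p μ01)))
    (hγ : ∀ fg : Lp 𝕜 p μ01 × Lp 𝕜 p μ01,
      ⇑(γ fg) =ᵐ[μ01] fun x : ℝ => if x < 1/2 then fg.1 (2 * x) else fg.2 (2 * x - 1))
    (huniv : indicatorConstLp p MeasurableSet.univ (measure_ne_top μ01 _) (1 : 𝕜) ∈ K)
    (hγK : ∀ f ∈ K, ∀ g ∈ K, γ (f, g) ∈ K) (t : ℝ) :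
    indicatorConstLp p (measurableSet_Iio (a := t)) (measure_ne_top μ01 _) (1 : 𝕜) ∈ K := by
  let T := {t : ℝ |
    indicatorConstLp p (measurableSet_Iio (a := t)) (measure_ne_top μ01 _) (1 : 𝕜) ∈ K}
  have hT : IsClosed T := hK.preimage (continuous_indicatorConstLp_Iio hp 1)
  have hlow : ∀ t ≤ 0, t ∈ T := fun t ht => by
    show _ ∈ K
    rw [indicatorConstLp_Iio_of_nonpos ht]
    exact K.zero_mem
  have hhigh : ∀ t ≥ 1, t ∈ T := fun t ht => by
    show _ ∈ K
    rwa [indicatorConstLp_Iio_of_one_le ht]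
  have hleft : ∀ t ∈ Icc (0 : ℝ) 1, t ∈ T → t / 2 ∈ T := fun t ht htT => by
    have h := hγK _ htT _ (hlow 0 le_rfl)
    rwa [juxtapose_indicatorConstLp γ hγ, indicatorConstLp_congr_ae
      (EventuallyEq.of_eq (juxtaposeSet_Iio_Iio_of_le ht.2 le_rfl))] at h
  have hright : ∀ t ∈ Icc (0 : ℝ) 1, t ∈ T → (t + 1) / 2 ∈ T := fun t ht htT => by
    have h := hγK _ (hhigh 1 le_rfl) _ htT
    rwa [juxtapose_indicatorConstLp γ hγ, indicatorConstLp_congr_ae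
      (EventuallyEq.of_eq (juxtaposeSet_Iio_Iio_of_ge le_rfl ht.1))] at h
  rcases le_or_gt t 0 with ht₀ | ht₀
  · exact hlow t ht₀
  rcases le_or_gt 1 t with ht₁ | ht₁
  · exact hhigh t ht₁
  exact Icc_subset_of_isClosed_of_half_mem hT (hlow 0 le_rfl) (hhigh 1 le_rfl) hleft hright
    ⟨ht₀.le, ht₁.le⟩

theorem Submodule.eq_top_of_juxtapose_mem (hp : p ≠ ∞) (K : Submodule 𝕜 (Lp 𝕜 p μ01))
    (hK : IsClosed (K : Set (Lp 𝕜 p μ01)))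
    (hγ : ∀ fg : Lp 𝕜 p μ01 × Lp 𝕜 p μ01,
      ⇑(γ fg) =ᵐ[μ01] fun x : ℝ => if x < 1/2 then fg.1 (2 * x) else fg.2 (2 * x - 1))
    (huniv : indicatorConstLp p MeasurableSet.univ (measure_ne_top μ01 _) (1 : 𝕜) ∈ K)
    (hγK : ∀ f ∈ K, ∀ g ∈ K, γ (f, g) ∈ K) :
    K = ⊤ :=
  K.eq_top_of_indicatorConstLp_one_mem hp hK fun _ hs _ =>
    indicatorConstLp_mem_of_isPiSystem hp (K := K.toAddSubgroup) hK
      (BorelSpace.measurable_eq.trans (borel_eq_generateFrom_Iio ℝ)) isPiSystem_Iio huniv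
      (by
        rintro _ ⟨t, rfl⟩ _
        exact indicatorConstLp_Iio_mem_of_juxtapose_mem γ hp K hK hγ huniv hγK t) hs

end Juxtaposition

theorem stmt_2_general {𝕜 V : Type*} [RCLike 𝕜] [NormedAddCommGroup V] [NormedSpace 𝕜 V]
    (v : V)
    (δ : V × V →ₗ[𝕜] V)
    (one : Lp 𝕜 1 μ01) (hone : ⇑one =ᵐ[μ01] fun _ => 1)
    (γ : Lp 𝕜 1 μ01 × Lp 𝕜 1 μ01 → Lp 𝕜 1 μ01)
    (hγ : ∀ fg : Lp 𝕜 1 μ01 × Lp 𝕜 1 μ01,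
      ⇑(γ fg) =ᵐ[μ01] fun x : ℝ => if x < 1/2 then fg.1 (2 * x) else fg.2 (2 * x - 1))
    (θ θ' : Lp 𝕜 1 μ01 →L[𝕜] V)
    (hθ1 : θ one = v) (hθγ : ∀ f g : Lp 𝕜 1 μ01, θ (γ (f, g)) = δ (θ f, θ g))
    (hθ'1 : θ' one = v) (hθ'γ : ∀ f g : Lp 𝕜 1 μ01, θ' (γ (f, g)) = δ (θ' f, θ' g)) :
    θ = θ' := by
  have hone_eq : indicatorConstLp 1 MeasurableSet.univ (measure_ne_top μ01 _) (1 : 𝕜) = one := by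
    rw [indicatorConstLp_univ]
    exact Lp.ext ((Lp.coeFn_const _ _ _).trans hone.symm)
  have hker : LinearMap.ker ((θ - θ' : Lp 𝕜 1 μ01 →L[𝕜] V) : Lp 𝕜 1 μ01 →ₗ[𝕜] V) = ⊤ := by
    refine Submodule.eq_top_of_juxtapose_mem γ ENNReal.one_ne_top _ (θ - θ').isClosed_ker hγ ?_ ?_
    · rw [LinearMap.mem_ker, hone_eq]
      simp [hθ1, hθ'1]
    · intro f hf g hg
      simp only [LinearMap.mem_ker, ContinuousLinearMap.coe_coe, FunLike.coe_sub, Pi.sub_apply,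
        sub_eq_zero] at hf hg ⊢
      rw [hθγ, hθ'γ, hf, hg]
  exact sub_eq_zero.1 (ContinuousLinearMap.coe_injective (LinearMap.ker_eq_top.1 hker))

/-- given a Banach space `V`, a point `v` of its unit ball and a
linear contraction `δ : V ⊕₁ V → V` with `δ(v,v) = v`, there is at most one bounded
linear map `θ : L¹[0,1] → V` with `θ(1) = v` and `θ(γ(f,g)) = δ(θf, θg)`. -/
theorem stmt_2 {𝕜 V : Type*} [RCLike 𝕜] [NormedAddCommGroup V] [NormedSpace 𝕜 V]
    [CompleteSpace V]
    (v : V) (hv : ‖v‖ ≤ 1)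
    (δ : V × V →ₗ[𝕜] V) (hδ : ∀ a : V × V, ‖δ a‖ ≤ (1/2) * (‖a.1‖ + ‖a.2‖))
    (hδv : δ (v, v) = v)
    (one : Lp 𝕜 1 μ01) (hone : ⇑one =ᵐ[μ01] fun _ => 1)
    (γ : Lp 𝕜 1 μ01 × Lp 𝕜 1 μ01 → Lp 𝕜 1 μ01)
    (hγ : ∀ fg : Lp 𝕜 1 μ01 × Lp 𝕜 1 μ01,
      ⇑(γ fg) =ᵐ[μ01] fun x : ℝ => if x < 1/2 then fg.1 (2 * x) else fg.2 (2 * x - 1))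
    (θ θ' : Lp 𝕜 1 μ01 →L[𝕜] V)
    (hθ1 : θ one = v) (hθγ : ∀ f g : Lp 𝕜 1 μ01, θ (γ (f, g)) = δ (θ f, θ g))
    (hθ'1 : θ' one = v) (hθ'γ : ∀ f g : Lp 𝕜 1 μ01, θ' (γ (f, g)) = δ (θ' f, θ' g)) :
    θ = θ' :=
  stmt_2_general v δ one hone γ hγ θ θ' hθ1 hθγ hθ'1 hθ'γ
end

section
/- The map ∫₀^– : L^1[0,1] → C_*[0,1], sending f to the function x ↦ ∫₀ˣ f, is a linear contraction satisfying ∫₀^–(1) = i (where i(x) = x) and ∫₀^–(γ(f,g)) = κ(∫₀^– f, ∫₀^– g) for all f, g ∈ L^1[0,1]. -/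
open MeasureTheory

local notation "μ01" => MeasureTheory.volume.restrict (Set.Icc (0:ℝ) 1)

/-- The indefinite integral `x ↦ ∫₀ˣ f` of an element of `L¹[0,1]`. -/
noncomputable def indefInt {𝕜 : Type*} [RCLike 𝕜] (f : Lp 𝕜 1 μ01) (x : ℝ) : 𝕜 :=
  ∫ t in Set.Ioc (0:ℝ) x, f t ∂μ01

/-!
On `[0,1]` the indefinite integral is the Lebesgue interval integral `∫₀ˣ f`. For the
juxtaposition one splits `∫₀ˣ` at `1/2` and substitutes `s = 2t` on `[0,1/2]` and `s = 2t - 1`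
on `[1/2,1]`; both substitutions halve the integral.
-/

open Set intervalIntegral
open scoped Interval

noncomputable def juxtapose {E : Type*} (F G : ℝ → E) (x : ℝ) : E :=
  if x < 1/2 then F (2 * x) else G (2 * x - 1)

section Juxtapose

variable {E : Type*} [NormedAddCommGroup E] [NormedSpace ℝ E] (F G : ℝ → E)

lemma intervalIntegral_juxtapose_of_le_half {b : ℝ} (hb : b ≤ 1/2) :
    ∫ t in (0:ℝ)..b, juxtapose F G t = (2:ℝ)⁻¹ • ∫ s in (0:ℝ)..2 * b, F s := by
  have hF : ∀ᵐ t ∂volume, t ∈ Ι 0 b → juxtapose F G t = F (2 * t) := by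
    filter_upwards [Measure.ae_ne volume (1/2 : ℝ)] with t ht_ne ht
    exact if_pos ((ht.2.trans (max_le (by norm_num) hb)).lt_of_ne ht_ne)
  rw [integral_congr_ae hF, integral_comp_mul_left (fun s => F s) two_ne_zero, mul_zero]

lemma intervalIntegral_juxtapose_of_half_le {b : ℝ} (hb : 1/2 ≤ b) :
    ∫ t in (1/2:ℝ)..b, juxtapose F G t = (2:ℝ)⁻¹ • ∫ s in (0:ℝ)..2 * b - 1, G s := by
  have hG : EqOn (juxtapose F G) (fun t => G (2 * t - 1)) (uIcc (1/2) b) := fun t ht =>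
    if_neg (not_lt.2 (uIcc_of_le hb ▸ ht).1)
  rw [integral_congr hG, integral_comp_mul_sub (fun s => G s) two_ne_zero]
  norm_num

end Juxtapose

section IndefInt

variable {𝕜 : Type*} [RCLike 𝕜]

lemma intervalIntegrable_coeFn_of_mem_Icc (f : Lp 𝕜 1 μ01) {a b : ℝ}
    (ha : a ∈ Icc (0:ℝ) 1) (hb : b ∈ Icc (0:ℝ) 1) : IntervalIntegrable f volume a b :=
  (IntegrableOn.mono_set (L1.integrable_coeFn f) (uIcc_subset_Icc ha hb)).intervalIntegrable

lemma intervalIntegral_congr_of_ae_eq {F G : ℝ → 𝕜} (hFG : F =ᵐ[μ01] G) {a b : ℝ}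
    (ha : a ∈ Icc (0:ℝ) 1) (hb : b ∈ Icc (0:ℝ) 1) :
    ∫ t in a..b, F t = ∫ t in a..b, G t :=
  integral_congr_ae_restrict <| ae_restrict_of_ae_restrict_of_subset
    (uIoc_subset_uIcc.trans (uIcc_subset_Icc ha hb)) hFG

lemma indefInt_eq_intervalIntegral (f : Lp 𝕜 1 μ01) {x : ℝ} (hx : x ∈ Icc (0:ℝ) 1) :
    indefInt f x = ∫ t in (0:ℝ)..x, f t := by
  rw [indefInt, Measure.restrict_restrict_of_subset (Ioc_subset_Icc_self.trans
    (Icc_subset_Icc_right hx.2)), integral_of_le hx.1]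

lemma continuousOn_indefInt (f : Lp 𝕜 1 μ01) : ContinuousOn (indefInt f) (Icc 0 1) := by
  have h := continuousOn_primitive_interval (a := 0) (b := 1) (μ := volume)
    (f := fun t => f t) (by rw [uIcc_of_le zero_le_one]; exact L1.integrable_coeFn f)
  rw [uIcc_of_le zero_le_one] at h
  exact h.congr fun x hx => indefInt_eq_intervalIntegral f hx

lemma indefInt_add (f g : Lp 𝕜 1 μ01) (x : ℝ) :
    indefInt (f + g) x = indefInt f x + indefInt g x := by
  rw [indefInt, indefInt, indefInt, integral_congr_ae (ae_restrict_of_ae (Lp.coeFn_add f g)),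
    ← integral_add (L1.integrable_coeFn f).integrableOn (L1.integrable_coeFn g).integrableOn]
  rfl

lemma indefInt_smul (c : 𝕜) (f : Lp 𝕜 1 μ01) (x : ℝ) :
    indefInt (c • f) x = c * indefInt f x := by
  rw [indefInt, integral_congr_ae (ae_restrict_of_ae (Lp.coeFn_smul c f))]
  exact integral_const_mul c _

lemma norm_indefInt_le (f : Lp 𝕜 1 μ01) (x : ℝ) : ‖indefInt f x‖ ≤ ‖f‖ := by
  rw [L1.norm_eq_integral_norm]
  exact (MeasureTheory.norm_integral_le_integral_norm _).trans
    (setIntegral_le_integral (L1.integrable_coeFn f).norm (.of_forall fun _ => norm_nonneg _))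

lemma indefInt_of_ae_eq_one {one : Lp 𝕜 1 μ01} (hone : ⇑one =ᵐ[μ01] fun _ => 1) {x : ℝ}
    (hx : x ∈ Icc (0:ℝ) 1) : indefInt one x = x := by
  rw [indefInt_eq_intervalIntegral one hx,
    intervalIntegral_congr_of_ae_eq hone (left_mem_Icc.2 zero_le_one) hx,
    intervalIntegral.integral_const, sub_zero, RCLike.real_smul_eq_coe_mul, mul_one]

lemma indefInt_of_ae_eq_juxtapose {f g h : Lp 𝕜 1 μ01} (hh : ⇑h =ᵐ[μ01] juxtapose f g)
    {x : ℝ} (hx : x ∈ Icc (0:ℝ) 1) :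
    indefInt h x = if x ≤ 1/2 then (1/2 : 𝕜) * indefInt f (2 * x)
      else (1/2 : 𝕜) * (indefInt f 1 + indefInt g (2 * x - 1)) := by
  have h0 : (0:ℝ) ∈ Icc (0:ℝ) 1 := left_mem_Icc.2 zero_le_one
  have hhalf : (1/2:ℝ) ∈ Icc (0:ℝ) 1 := ⟨by norm_num, by norm_num⟩
  have half_smul : ∀ z : 𝕜, (2:ℝ)⁻¹ • z = (1/2 : 𝕜) * z := fun z => by
    rw [RCLike.real_smul_eq_coe_mul, RCLike.ofReal_inv, RCLike.ofReal_ofNat, one_div]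
  rw [indefInt_eq_intervalIntegral h hx]
  split_ifs with hx_half
  · rw [intervalIntegral_congr_of_ae_eq hh h0 hx,
      intervalIntegral_juxtapose_of_le_half _ _ hx_half, half_smul,
      indefInt_eq_intervalIntegral f ⟨by linarith [hx.1], by linarith⟩]
  · push Not at hx_half
    rw [← integral_add_adjacent_intervals (b := 1/2)
        (intervalIntegrable_coeFn_of_mem_Icc h h0 hhalf)
        (intervalIntegrable_coeFn_of_mem_Icc h hhalf hx),
      intervalIntegral_congr_of_ae_eq hh h0 hhalf, intervalIntegral_congr_of_ae_eq hh hhalf hx,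
      intervalIntegral_juxtapose_of_le_half _ _ le_rfl,
      intervalIntegral_juxtapose_of_half_le _ _ hx_half.le, half_smul, half_smul, ← mul_add,
      indefInt_eq_intervalIntegral f (right_mem_Icc.2 zero_le_one),
      indefInt_eq_intervalIntegral g ⟨by linarith, by linarith [hx.2]⟩]
    norm_num

end IndefInt

/-- the map `∫₀^– : L¹[0,1] → C_*[0,1]`, `f ↦ (x ↦ ∫₀ˣ f)`, lands in
`C_*[0,1]` (continuous functions vanishing at `0`), is a linear contraction for the sup
norm on `C_*[0,1]`, sends `1` to the identity function `i(x) = x`, and satisfies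
`∫₀^–(γ(f,g)) = κ(∫₀^– f, ∫₀^– g)`. -/
theorem stmt_5 {𝕜 : Type*} [RCLike 𝕜]
    (one : Lp 𝕜 1 μ01) (hone : ⇑one =ᵐ[μ01] fun _ => 1)
    (γ : Lp 𝕜 1 μ01 × Lp 𝕜 1 μ01 → Lp 𝕜 1 μ01)
    (hγ : ∀ fg : Lp 𝕜 1 μ01 × Lp 𝕜 1 μ01,
      ⇑(γ fg) =ᵐ[μ01] fun x : ℝ => if x < 1/2 then fg.1 (2 * x) else fg.2 (2 * x - 1))
    (f g : Lp 𝕜 1 μ01) (c : 𝕜) :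
    -- lands in `C_*[0,1]`:
    ContinuousOn (indefInt f) (Set.Icc (0:ℝ) 1) ∧
    indefInt f 0 = 0 ∧
    -- linear:
    (∀ x : ℝ, indefInt (f + g) x = indefInt f x + indefInt g x) ∧
    (∀ x : ℝ, indefInt (c • f) x = c * indefInt f x) ∧
    -- contraction for the sup norm:
    (∀ x ∈ Set.Icc (0:ℝ) 1, ‖indefInt f x‖ ≤ ‖f‖) ∧
    -- sends the constant function 1 to `i(x) = x`:
    (∀ x ∈ Set.Icc (0:ℝ) 1, indefInt one x = (x : 𝕜)) ∧
    -- intertwines `γ` and `κ`: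
    (∀ x ∈ Set.Icc (0:ℝ) 1,
      indefInt (γ (f, g)) x =
        if x ≤ 1/2 then (1/2 : 𝕜) * indefInt f (2 * x)
        else (1/2 : 𝕜) * (indefInt f 1 + indefInt g (2 * x - 1))) :=
  ⟨continuousOn_indefInt f, by simp [indefInt], indefInt_add f g, indefInt_smul c f,
    fun x _ => norm_indefInt_le f x, fun _ hx => indefInt_of_ae_eq_one hone hx,
    fun _ hx => indefInt_of_ae_eq_juxtapose (hγ (f, g)) hx⟩
end

section
/- Let V be a Banach space, v ∈ V with ‖v‖ ≤ 1, and δ : V ⊕_∞ V → V a linear contraction (with ‖(v₁,v₂)‖ = max(‖v₁‖,‖v₂‖)) satisfying δ(v,v) = v. Then there exists a unique linear contraction θ : C({0,1}^ℕ) → V with θ(1) = v and θ(γ(f,g)) = δ(θ(f),θ(g)) for all f,g, where γ(f,g)(x₀,x₁,…) = f(x₁,x₂,…) if x₀ = 0 and g(x₁,x₂,…) if x₀ = 1. -/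
open Filter Topology

namespace Stmt8

variable {𝕜 V : Type*} [RCLike 𝕜] [NormedAddCommGroup V] [NormedSpace 𝕜 V]

def consMap (b : Bool) : C(ℕ → Bool, ℕ → Bool) where
  toFun x n := Nat.casesOn n b x
  continuous_toFun := by
    refine continuous_pi fun n => ?_
    cases n with
    | zero => exact continuous_const
    | succ k => exact (continuous_apply k).comp continuous_id

def truncMap (n : ℕ) : C(ℕ → Bool, ℕ → Bool) where
  toFun x k := if k < n then x k else false
  continuous_toFun := by
    refine continuous_pi fun k => ?_
    by_cases h : k < n
    · simpa [h] using continuous_apply k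
    · simpa [h] using (continuous_const : Continuous fun _ : ℕ → Bool => false)

lemma cons_trunc (b : Bool) (n : ℕ) :
    (consMap b).comp (truncMap n) = (truncMap (n+1)).comp (consMap b) := by
  ext x k
  cases k with
  | zero => simp [consMap, truncMap]
  | succ j => simp [consMap, truncMap, Nat.succ_lt_succ_iff]

lemma comp_norm_le (f : C(ℕ → Bool, 𝕜)) (g : C(ℕ → Bool, ℕ → Bool)) :
    ‖f.comp g‖ ≤ ‖f‖ :=
  (ContinuousMap.norm_le _ (norm_nonneg f)).mpr fun x => f.norm_coe_le_norm (g x)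

lemma trunc_zero_comp (f : C(ℕ → Bool, 𝕜)) :
    f.comp (truncMap 0) = f (fun _ => false) • (1 : C(ℕ → Bool, 𝕜)) := by
  ext x
  simp [truncMap]

variable (v : V) (δ : V × V →ₗ[𝕜] V)

def A : ℕ → C(ℕ → Bool, 𝕜) → V
  | 0, f => f (fun _ => false) • v
  | (n+1), f => δ (A n (f.comp (consMap false)), A n (f.comp (consMap true)))

lemma A_add : ∀ (n : ℕ) (f g : C(ℕ → Bool, 𝕜)),
    A v δ n (f + g) = A v δ n f + A v δ n g
  | 0, f, g => by simp [A, add_smul]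
  | (n+1), f, g => by
      simp only [A, ContinuousMap.add_comp, A_add n, ← map_add, Prod.mk_add_mk]

lemma A_smul : ∀ (n : ℕ) (c : 𝕜) (f : C(ℕ → Bool, 𝕜)),
    A v δ n (c • f) = c • A v δ n f
  | 0, c, f => by simp [A, smul_smul]
  | (n+1), c, f => by
      simp only [A, ContinuousMap.smul_comp, A_smul n, ← map_smul, Prod.smul_mk]

lemma A_one (hδv : δ (v, v) = v) : ∀ n : ℕ, A v δ n (1 : C(ℕ → Bool, 𝕜)) = v
  | 0 => by simp [A]
  | (n+1) => by
      have h1 : (1 : C(ℕ → Bool, 𝕜)).comp (consMap false) = 1 := by ext x; simp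
      have h2 : (1 : C(ℕ → Bool, 𝕜)).comp (consMap true) = 1 := by ext x; simp
      simp [A, h1, h2, A_one hδv n, hδv]

variable (hv : ‖v‖ ≤ 1) (hδ : ∀ a : V × V, ‖δ a‖ ≤ max ‖a.1‖ ‖a.2‖)

include hv hδ in
lemma A_norm : ∀ (n : ℕ) (f : C(ℕ → Bool, 𝕜)), ‖A v δ n f‖ ≤ ‖f‖
  | 0, f => by
      calc ‖f (fun _ => false) • v‖ = ‖f (fun _ => false)‖ * ‖v‖ := norm_smul _ _
      _ ≤ ‖f‖ * 1 := by
          exact mul_le_mul (f.norm_coe_le_norm _) hv (norm_nonneg v) (norm_nonneg f)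
      _ = ‖f‖ := mul_one _
  | (n+1), f => by
      refine (hδ _).trans (max_le ?_ ?_)
      · exact (A_norm n _).trans (comp_norm_le _ _)
      · exact (A_norm n _).trans (comp_norm_le _ _)

include hv hδ in
lemma A_const (hδv : δ (v, v) = v) :
    ∀ (n : ℕ) (f : C(ℕ → Bool, 𝕜)) (c : 𝕜),
    ‖A v δ n f - c • v‖ ≤ ‖f - c • (1 : C(ℕ → Bool, 𝕜))‖
  | 0, f, c => by
      have : A v δ 0 f - c • v = (f (fun _ => false) - c) • v := by
        simp [A, sub_smul]
      rw [this, norm_smul]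
      calc ‖f (fun _ => false) - c‖ * ‖v‖ ≤ ‖f (fun _ => false) - c‖ * 1 :=
          mul_le_mul_of_nonneg_left hv (norm_nonneg _)
      _ = ‖(f - c • (1 : C(ℕ → Bool, 𝕜))) (fun _ => false)‖ := by simp
      _ ≤ ‖f - c • (1 : C(ℕ → Bool, 𝕜))‖ := ContinuousMap.norm_coe_le_norm _ _
  | (n+1), f, c => by
      have hcv : c • v = δ (c • v, c • v) := by
        rw [← Prod.smul_mk, map_smul, hδv]
      have key : A v δ (n+1) f - c • v
          = δ (A v δ n (f.comp (consMap false)) - c • v,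
               A v δ n (f.comp (consMap true)) - c • v) := by
        rw [← Prod.mk_sub_mk, map_sub, ← hcv]; rfl
      rw [key]
      refine (hδ _).trans (max_le ?_ ?_)
      · refine (A_const hδv n _ c).trans ?_
        have : f.comp (consMap false) - c • (1 : C(ℕ → Bool, 𝕜))
            = (f - c • 1).comp (consMap false) := by ext x; simp
        rw [this]; exact comp_norm_le _ _
      · refine (A_const hδv n _ c).trans ?_
        have : f.comp (consMap true) - c • (1 : C(ℕ → Bool, 𝕜))
            = (f - c • 1).comp (consMap true) := by ext x; simp
        rw [this]; exact comp_norm_le _ _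

include hv hδ in
lemma A_cauchy_est (hδv : δ (v, v) = v) (k : ℕ) :
    ∀ (n : ℕ) (f : C(ℕ → Bool, 𝕜)),
    ‖A v δ (n + k) f - A v δ n f‖ ≤ ‖f - f.comp (truncMap n)‖
  | 0, f => by
      have h0 : A v δ 0 f = f (fun _ => false) • v := rfl
      rw [Nat.zero_add, h0, trunc_zero_comp]
      exact A_const v δ hv hδ hδv k f _
  | (n+1), f => by
      have key : A v δ (n + 1 + k) f - A v δ (n+1) f
          = δ (A v δ (n + k) (f.comp (consMap false)) - A v δ n (f.comp (consMap false)),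
               A v δ (n + k) (f.comp (consMap true)) - A v δ n (f.comp (consMap true))) := by
        have e1 : n + 1 + k = (n + k) + 1 := by omega
        rw [e1]
        rw [show A v δ ((n+k)+1) f = δ (A v δ (n+k) (f.comp (consMap false)),
              A v δ (n+k) (f.comp (consMap true))) from rfl,
            show A v δ (n+1) f = δ (A v δ n (f.comp (consMap false)),
              A v δ n (f.comp (consMap true))) from rfl, ← map_sub, Prod.mk_sub_mk]
      rw [key]
      refine (hδ _).trans (max_le ?_ ?_)
      · refine (A_cauchy_est hδv k n _).trans ?_
        have : f.comp (consMap false) - (f.comp (consMap false)).comp (truncMap n)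
            = (f - f.comp (truncMap (n+1))).comp (consMap false) := by
          rw [ContinuousMap.comp_assoc, cons_trunc, ContinuousMap.sub_comp,
            ContinuousMap.comp_assoc]
        rw [this]; exact comp_norm_le _ _
      · refine (A_cauchy_est hδv k n _).trans ?_
        have : f.comp (consMap true) - (f.comp (consMap true)).comp (truncMap n)
            = (f - f.comp (truncMap (n+1))).comp (consMap true) := by
          rw [ContinuousMap.comp_assoc, cons_trunc, ContinuousMap.sub_comp,
            ContinuousMap.comp_assoc]
        rw [this]; exact comp_norm_le _ _


omit hv in
include hδ in
lemma A_unique_est (hδv : δ (v, v) = v) (θ' : C(ℕ → Bool, 𝕜) →L[𝕜] V)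
    (hθn : ∀ f : C(ℕ → Bool, 𝕜), ‖θ' f‖ ≤ ‖f‖) (hθ1 : θ' 1 = v)
    (hθrec : ∀ f : C(ℕ → Bool, 𝕜),
      θ' f = δ (θ' (f.comp (consMap false)), θ' (f.comp (consMap true)))) :
    ∀ (n : ℕ) (f : C(ℕ → Bool, 𝕜)),
      ‖θ' f - A v δ n f‖ ≤ ‖f - f.comp (truncMap n)‖
  | 0, f => by
      have key : θ' (f - f.comp (truncMap 0)) = θ' f - A v δ 0 f := by
        rw [map_sub, trunc_zero_comp, map_smul, hθ1]; rfl
      rw [← key]; exact hθn _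
  | (n+1), f => by
      have key : θ' f - A v δ (n+1) f =
          δ (θ' (f.comp (consMap false)) - A v δ n (f.comp (consMap false)),
             θ' (f.comp (consMap true)) - A v δ n (f.comp (consMap true))) := by
        rw [← Prod.mk_sub_mk, map_sub, ← hθrec f]; rfl
      rw [key]
      refine (hδ _).trans (max_le ?_ ?_)
      · refine (A_unique_est hδv θ' hθn hθ1 hθrec n _).trans ?_
        have : f.comp (consMap false) - (f.comp (consMap false)).comp (truncMap n)
            = (f - f.comp (truncMap (n+1))).comp (consMap false) := by
          rw [ContinuousMap.comp_assoc, cons_trunc, ContinuousMap.sub_comp,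
            ContinuousMap.comp_assoc]
        rw [this]; exact comp_norm_le _ _
      · refine (A_unique_est hδv θ' hθn hθ1 hθrec n _).trans ?_
        have : f.comp (consMap true) - (f.comp (consMap true)).comp (truncMap n)
            = (f - f.comp (truncMap (n+1))).comp (consMap true) := by
          rw [ContinuousMap.comp_assoc, cons_trunc, ContinuousMap.sub_comp,
            ContinuousMap.comp_assoc]
        rw [this]; exact comp_norm_le _ _

lemma tendsto_trunc (f : C(ℕ → Bool, 𝕜)) :
    Tendsto (fun n => ‖f - f.comp (truncMap n)‖) atTop (𝓝 0) := by
  rw [Metric.tendsto_atTop]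
  intro ε hε
  set g : ((ℕ → Bool) × (ℕ → Bool)) → ℝ := fun p => ‖f p.1 - f p.2‖ with hgdef
  have hgc : Continuous g :=
    ((f.continuous.comp continuous_fst).sub (f.continuous.comp continuous_snd)).norm
  set K : Set ((ℕ → Bool) × (ℕ → Bool)) := {p | ε/2 ≤ g p} with hKdef
  have hKcl : IsClosed K := isClosed_le continuous_const hgc
  have hKc : IsCompact K := hKcl.isCompact
  set U : ℕ → Set ((ℕ → Bool) × (ℕ → Bool)) := fun m => {p | p.1 m ≠ p.2 m} with hUdef
  have hUopen : ∀ m, IsOpen (U m) := by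
    intro m
    have hc : Continuous fun p : (ℕ → Bool) × (ℕ → Bool) => (p.1 m, p.2 m) :=
      ((continuous_apply m).comp continuous_fst).prodMk
        ((continuous_apply m).comp continuous_snd)
    have : U m = (fun p : (ℕ → Bool) × (ℕ → Bool) => (p.1 m, p.2 m)) ⁻¹'
        {q : Bool × Bool | q.1 ≠ q.2} := rfl
    rw [this]
    exact (isOpen_discrete _).preimage hc
  have hcover : K ⊆ ⋃ m, U m := by
    intro p hp
    have hne : p.1 ≠ p.2 := by
      intro h
      have : g p = 0 := by simp [hgdef, h]
      rw [hKdef] at hp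
      simp only [Set.mem_setOf_eq, this] at hp
      linarith
    obtain ⟨m, hm⟩ := Function.ne_iff.mp hne
    exact Set.mem_iUnion.mpr ⟨m, hm⟩
  obtain ⟨s, hs⟩ := hKc.elim_finite_subcover U hUopen hcover
  refine ⟨s.sup id + 1, fun n hn => ?_⟩
  have hptw : ∀ x : ℕ → Bool, ‖(f - f.comp (truncMap n)) x‖ ≤ ε/2 := by
    intro x
    have hnot : (x, truncMap n x) ∉ K := by
      intro hmem
      obtain ⟨m, hms, hm⟩ := Set.mem_iUnion₂.mp (hs hmem)
      have hmn : m < n := by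
        have := Finset.le_sup (f := id) hms
        simp only [id] at this
        omega
      apply hm
      simp [hUdef, truncMap, hmn]
    have : g (x, truncMap n x) < ε/2 := by
      by_contra h
      exact hnot (le_of_not_gt h)
    simpa [hgdef, ContinuousMap.sub_apply] using this.le
  have hle : ‖f - f.comp (truncMap n)‖ ≤ ε/2 :=
    (ContinuousMap.norm_le _ (by linarith)).mpr hptw
  rw [Real.dist_eq, sub_zero, abs_of_nonneg (norm_nonneg _)]
  linarith

end Stmt8

open Stmt8


/-- universal property of `C({0,1}^ℕ)`: given a Banach space `V`,
`v ∈ V` with `‖v‖ ≤ 1`, and a linear contraction `δ : V ⊕_∞ V → V` with `δ(v,v) = v`,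
there is a unique linear contraction `θ : C({0,1}^ℕ) → V` with `θ(1) = v` and
`θ(γ(f,g)) = δ(θf, θg)`, where `γ` juxtaposes on the two halves of Cantor space. -/
theorem stmt_8 {𝕜 V : Type*} [RCLike 𝕜] [NormedAddCommGroup V] [NormedSpace 𝕜 V]
    [CompleteSpace V]
    (v : V) (hv : ‖v‖ ≤ 1)
    (δ : V × V →ₗ[𝕜] V) (hδ : ∀ a : V × V, ‖δ a‖ ≤ max ‖a.1‖ ‖a.2‖)
    (hδv : δ (v, v) = v)
    (γ : C(ℕ → Bool, 𝕜) × C(ℕ → Bool, 𝕜) → C(ℕ → Bool, 𝕜))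
    (hγ : ∀ (fg : C(ℕ → Bool, 𝕜) × C(ℕ → Bool, 𝕜)) (x : ℕ → Bool),
      γ fg x = if x 0 = false then fg.1 (fun n => x (n + 1)) else fg.2 (fun n => x (n + 1))) :
    ∃! θ : C(ℕ → Bool, 𝕜) →L[𝕜] V, ‖θ‖ ≤ 1 ∧ θ 1 = v ∧
      ∀ fg : C(ℕ → Bool, 𝕜) × C(ℕ → Bool, 𝕜), θ (γ fg) = δ (θ fg.1, θ fg.2) := by
  classical
  haveI : Nonempty V := ⟨0⟩
  -- juxtaposition facts
  have hγeq : ∀ f : C(ℕ → Bool, 𝕜),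
      γ (f.comp (consMap false), f.comp (consMap true)) = f := by
    intro f
    ext x
    rw [hγ]
    cases hx : x 0 with
    | false =>
        rw [if_pos rfl]
        show f ((consMap false) fun n => x (n+1)) = f x
        congr 1
        funext n
        cases n with
        | zero => exact hx.symm
        | succ k => rfl
    | true =>
        rw [if_neg (by simp)]
        show f ((consMap true) fun n => x (n+1)) = f x
        congr 1
        funext n
        cases n with
        | zero => exact hx.symm
        | succ k => rfl
  have hγcomp : ∀ fg : C(ℕ → Bool, 𝕜) × C(ℕ → Bool, 𝕜),
      (γ fg).comp (consMap false) = fg.1 ∧ (γ fg).comp (consMap true) = fg.2 := by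
    intro fg
    constructor
    · ext x
      simp only [ContinuousMap.comp_apply]
      rw [hγ]
      simp [consMap]
    · ext x
      simp only [ContinuousMap.comp_apply]
      rw [hγ]
      simp [consMap]
  -- Cauchy sequence and limit
  have hcauchy : ∀ f : C(ℕ → Bool, 𝕜), CauchySeq (fun n => A v δ n f) := by
    intro f
    apply cauchySeq_of_le_tendsto_0 (b := fun N => 2 * ‖f - f.comp (truncMap N)‖)
    · intro n m N hn hm
      obtain ⟨k, rfl⟩ := Nat.exists_eq_add_of_le hn
      obtain ⟨l, rfl⟩ := Nat.exists_eq_add_of_le hm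
      calc dist (A v δ (N + k) f) (A v δ (N + l) f)
          ≤ dist (A v δ (N + k) f) (A v δ N f) + dist (A v δ N f) (A v δ (N + l) f) :=
            dist_triangle _ _ _
        _ ≤ ‖f - f.comp (truncMap N)‖ + ‖f - f.comp (truncMap N)‖ := by
            rw [dist_eq_norm, dist_eq_norm']
            exact add_le_add (A_cauchy_est v δ hv hδ hδv k N f)
              (A_cauchy_est v δ hv hδ hδv l N f)
        _ = 2 * ‖f - f.comp (truncMap N)‖ := by ring
    · simpa using (tendsto_trunc f).const_mul 2
  set θfun : C(ℕ → Bool, 𝕜) → V := fun f => limUnder atTop (fun n => A v δ n f) with hθfun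
  have htend : ∀ f : C(ℕ → Bool, 𝕜),
      Tendsto (fun n => A v δ n f) atTop (𝓝 (θfun f)) :=
    fun f => (hcauchy f).tendsto_limUnder
  have hadd : ∀ f g : C(ℕ → Bool, 𝕜), θfun (f + g) = θfun f + θfun g := by
    intro f g
    refine tendsto_nhds_unique (htend (f + g)) ?_
    have := (htend f).add (htend g)
    simpa [A_add] using this
  have hsmul : ∀ (c : 𝕜) (f : C(ℕ → Bool, 𝕜)), θfun (c • f) = c • θfun f := by
    intro c f
    refine tendsto_nhds_unique (htend (c • f)) ?_
    have := (htend f).const_smul c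
    simpa [A_smul] using this
  set θL : C(ℕ → Bool, 𝕜) →ₗ[𝕜] V :=
    { toFun := θfun, map_add' := hadd, map_smul' := hsmul } with hθL
  have hbound : ∀ f : C(ℕ → Bool, 𝕜), ‖θL f‖ ≤ 1 * ‖f‖ := by
    intro f
    rw [one_mul]
    exact le_of_tendsto (htend f).norm
      (Filter.Eventually.of_forall fun n => A_norm v δ hv hδ n f)
  set θ : C(ℕ → Bool, 𝕜) →L[𝕜] V := θL.mkContinuous 1 hbound with hθdef
  have hθapply : ∀ f, θ f = θfun f := fun f => rfl
  have hθnorm : ‖θ‖ ≤ 1 := θL.mkContinuous_norm_le (by norm_num) hbound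
  have hθ1 : θ 1 = v := by
    rw [hθapply]
    refine tendsto_nhds_unique (htend 1) ?_
    simp only [A_one v δ hδv]
    exact tendsto_const_nhds
  -- continuity of δ
  have hδcont : Continuous δ := by
    have := δ.mkContinuous 1 (fun a => by
      rw [one_mul, Prod.norm_def]
      exact hδ a)
    exact (δ.mkContinuous 1 (fun a => by rw [one_mul, Prod.norm_def]; exact hδ a)).continuous
  have hγprop : ∀ fg : C(ℕ → Bool, 𝕜) × C(ℕ → Bool, 𝕜),
      θ (γ fg) = δ (θ fg.1, θ fg.2) := by
    intro fg
    rw [hθapply, hθapply, hθapply]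
    have h1 : Tendsto (fun n => A v δ (n + 1) (γ fg)) atTop (𝓝 (θfun (γ fg))) :=
      (htend (γ fg)).comp (tendsto_add_atTop_nat 1)
    have heq : (fun n => A v δ (n + 1) (γ fg))
        = fun n => δ (A v δ n fg.1, A v δ n fg.2) := by
      funext n
      show δ (A v δ n ((γ fg).comp (consMap false)), A v δ n ((γ fg).comp (consMap true))) = _
      rw [(hγcomp fg).1, (hγcomp fg).2]
    rw [heq] at h1
    have h2 : Tendsto (fun n => δ (A v δ n fg.1, A v δ n fg.2)) atTop
        (𝓝 (δ (θfun fg.1, θfun fg.2))) :=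
      (hδcont.tendsto _).comp ((htend fg.1).prodMk_nhds (htend fg.2))
    exact tendsto_nhds_unique h1 h2
  refine ⟨θ, ⟨hθnorm, hθ1, hγprop⟩, ?_⟩
  -- uniqueness
  rintro θ' ⟨hn', h1', hg'⟩
  ext f
  have hθ'n : ∀ g : C(ℕ → Bool, 𝕜), ‖θ' g‖ ≤ ‖g‖ := by
    intro g
    calc ‖θ' g‖ ≤ ‖θ'‖ * ‖g‖ := θ'.le_opNorm g
    _ ≤ 1 * ‖g‖ := mul_le_mul_of_nonneg_right hn' (norm_nonneg g)
    _ = ‖g‖ := one_mul _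
  have hθ'rec : ∀ g : C(ℕ → Bool, 𝕜),
      θ' g = δ (θ' (g.comp (consMap false)), θ' (g.comp (consMap true))) := by
    intro g
    conv_lhs => rw [← hγeq g]
    exact hg' (g.comp (consMap false), g.comp (consMap true))
  have hest := A_unique_est v δ hδ hδv θ' hθ'n h1' hθ'rec
  have htend' : Tendsto (fun n => A v δ n f) atTop (𝓝 (θ' f)) := by
    rw [tendsto_iff_norm_sub_tendsto_zero]
    refine squeeze_zero (fun n => norm_nonneg _) (fun n => ?_) (tendsto_trunc f)
    rw [norm_sub_rev]
    exact hest n f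
  rw [hθapply]
  exact tendsto_nhds_unique htend' (htend f)
end

section
/- Let 1 ≤ p < ∞, let V be a Banach space, and let δ : 𝔽 ⊕ V → V be a linear map satisfying ‖δ(c,v)‖ ≤ (|c|^p + ‖v‖^p)^{1/p} for all c ∈ 𝔽, v ∈ V. Then there exists a unique linear contraction θ : ℓ^p → V such that θ(c, a₀, a₁, …) = δ(c, θ(a₀, a₁, …)) for all c ∈ 𝔽 and (a₀,a₁,…) ∈ ℓ^p. -/
open ENNReal Filter Topology

/-! The recurrence says that `θ` is a fixed point of `Φ := lp.recStep δ : Θ ↦ δ ∘ (head, Θ ∘ tail)`.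
Since `‖f‖ ^ p = ‖f 0‖ ^ p + ‖tail f‖ ^ p`, the bound on `δ` makes `Φ` preserve contractions, and
since `δ (0, ·)` is a contraction, `‖Φ^[N] A f - Φ^[N] B f‖ ≤ ‖(A - B) (tail^N f)‖`, which tends
to `0` with the `ℓ^p` tails of `f`. Hence `Φ^[N] 0` converges pointwise to a contraction fixed by
`Φ`, and every bounded fixed point of `Φ` is that same pointwise limit. -/

theorem Memℓp.comp_injective {α β : Type*} {E : α → Type*} [∀ i, NormedAddCommGroup (E i)]
    {p : ℝ≥0∞} {f : ∀ i, E i} (hf : Memℓp f p) {e : β → α} (he : Function.Injective e) :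
    Memℓp (fun i => f (e i)) p := by
  rcases p.trichotomy with rfl | rfl | hp
  · exact memℓp_zero ((memℓp_zero_iff.1 hf).preimage he.injOn)
  · exact memℓp_infty ((memℓp_infty_iff.1 hf).mono (Set.range_comp_subset_range e fun i => ‖f i‖))
  · exact memℓp_gen ((hf.summable hp).comp_injective he)

namespace lp

section Tail

variable (𝕜 : Type*) {E : Type*} [NormedField 𝕜] [NormedAddCommGroup E] [NormedSpace 𝕜 E]
  {p : ℝ≥0∞} [Fact (1 ≤ p)]

local notation "ℓp" => lp (fun _ : ℕ => E) p

noncomputable def tail : ℓp →L[𝕜] ℓp :=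
  LinearMap.mkContinuous
    { toFun f := ⟨fun n => f (n + 1), (lp.memℓp f).comp_injective (add_left_injective 1)⟩
      map_add' _ _ := rfl
      map_smul' _ _ := rfl }
    1 fun f => by
      rw [one_mul]
      rcases p.dichotomy with rfl | hp
      · exact lp.norm_le_of_forall_le (norm_nonneg f)
          fun n => lp.norm_apply_le_norm ENNReal.top_ne_zero f (n + 1)
      · have hp0 : 0 < p.toReal := one_pos.trans_le hp
        refine lp.norm_le_of_tsum_le hp0 (norm_nonneg f) ?_
        rw [lp.norm_rpow_eq_tsum hp0]
        exact tsum_comp_le_tsum_of_inj ((lp.memℓp f).summable hp0) (fun _ => by positivity)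
          (add_left_injective 1)

variable {𝕜}

@[simp]
theorem tail_apply (f : ℓp) (n : ℕ) : tail 𝕜 f n = f (n + 1) := rfl

theorem tail_pow_apply (N : ℕ) (f : ℓp) (n : ℕ) :
    (tail 𝕜 ^ N) f n = f (n + N) := by
  induction N generalizing f with
  | zero => rfl
  | succ N ih => exact (ih (tail 𝕜 f)).trans (by rw [tail_apply, add_assoc])

theorem ext_head_tail {f g : ℓp} (h0 : f 0 = g 0)
    (hs : tail 𝕜 f = tail 𝕜 g) : f = g := by
  ext (_ | n)
  · exact h0
  · exact congr($hs n)

theorem norm_rpow_eq_head_add_tail (hp : p ≠ ∞) (f : ℓp) :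
    ‖f‖ ^ p.toReal = ‖f 0‖ ^ p.toReal + ‖tail 𝕜 f‖ ^ p.toReal := by
  have hp0 : 0 < p.toReal := ENNReal.toReal_pos (zero_lt_one.trans_le Fact.out).ne' hp
  rw [lp.norm_rpow_eq_tsum hp0, lp.norm_rpow_eq_tsum hp0]
  exact ((lp.memℓp f).summable hp0).tsum_eq_zero_add

theorem tendsto_norm_tail_pow_apply (hp : p ≠ ∞) (f : ℓp) :
    Tendsto (fun N => ‖(tail 𝕜 ^ N) f‖) atTop (𝓝 0) := by
  have hp0 : 0 < p.toReal := ENNReal.toReal_pos (zero_lt_one.trans_le Fact.out).ne' hp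
  have h := (tendsto_sum_nat_add fun n => ‖f n‖ ^ p.toReal).rpow_const
    (p := 1 / p.toReal) (Or.inr (by positivity))
  rw [Real.zero_rpow (by positivity)] at h
  refine h.congr fun N => ?_
  simp only [lp.norm_eq_tsum_rpow hp0, tail_pow_apply]

end Tail

section Recursion

variable {𝕜 E V : Type*} [NontriviallyNormedField 𝕜] [NormedAddCommGroup E] [NormedSpace 𝕜 E]
  [NormedAddCommGroup V] [NormedSpace 𝕜 V] {p : ℝ≥0∞} [Fact (1 ≤ p)]
  (δ : E × V →L[𝕜] V)

local notation "ℓp" => lp (fun _ : ℕ => E) p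

theorem norm_apply_zero_le (hp : p ≠ ∞)
    (hδ : ∀ a : E × V, ‖δ a‖ ≤ (‖a.1‖ ^ p.toReal + ‖a.2‖ ^ p.toReal) ^ (1 / p.toReal)) (v : V) :
    ‖δ (0, v)‖ ≤ ‖v‖ := by
  have hp0 : 0 < p.toReal := ENNReal.toReal_pos (zero_lt_one.trans_le Fact.out).ne' hp
  simpa [Real.zero_rpow hp0.ne', ← Real.rpow_mul (norm_nonneg v), hp0.ne'] using hδ (0, v)

noncomputable def recStep (Θ : ℓp →L[𝕜] V) : ℓp →L[𝕜] V :=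
  δ ∘L ((evalCLM 𝕜 (fun _ : ℕ => E) p 0).prod (Θ ∘L tail 𝕜))

@[simp]
theorem recStep_apply (Θ : ℓp →L[𝕜] V) (f : ℓp) :
    recStep δ Θ f = δ (f 0, Θ (tail 𝕜 f)) := rfl

theorem norm_recStep_le_one (hp : p ≠ ∞)
    (hδ : ∀ a : E × V, ‖δ a‖ ≤ (‖a.1‖ ^ p.toReal + ‖a.2‖ ^ p.toReal) ^ (1 / p.toReal))
    {Θ : ℓp →L[𝕜] V} (hΘ : ‖Θ‖ ≤ 1) : ‖recStep δ Θ‖ ≤ 1 := by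
  have hp0 : 0 < p.toReal := ENNReal.toReal_pos (zero_lt_one.trans_le Fact.out).ne' hp
  refine ContinuousLinearMap.opNorm_le_bound _ zero_le_one fun f => ?_
  have hΘf : ‖Θ (tail 𝕜 f)‖ ≤ ‖tail 𝕜 f‖ := Θ.le_of_opNorm_le hΘ _ |>.trans_eq (one_mul _)
  calc ‖recStep δ Θ f‖
      ≤ (‖f 0‖ ^ p.toReal + ‖Θ (tail 𝕜 f)‖ ^ p.toReal) ^ (1 / p.toReal) := hδ _
    _ ≤ (‖f 0‖ ^ p.toReal + ‖tail 𝕜 f‖ ^ p.toReal) ^ (1 / p.toReal) := by gcongr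
    _ = 1 * ‖f‖ := by
      rw [← norm_rpow_eq_head_add_tail hp, ← Real.rpow_mul (norm_nonneg f),
        mul_one_div_cancel hp0.ne', Real.rpow_one, one_mul]

theorem norm_iterate_recStep_zero_le_one (hp : p ≠ ∞)
    (hδ : ∀ a : E × V, ‖δ a‖ ≤ (‖a.1‖ ^ p.toReal + ‖a.2‖ ^ p.toReal) ^ (1 / p.toReal)) (N : ℕ) :
    ‖(recStep δ)^[N] (0 : ℓp →L[𝕜] V)‖ ≤ 1 := by
  induction N with
  | zero => simp
  | succ N ih =>
    rw [Function.iterate_succ_apply']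
    exact norm_recStep_le_one δ hp hδ ih

theorem norm_iterate_recStep_sub_apply_le (hδ0 : ∀ v, ‖δ (0, v)‖ ≤ ‖v‖) (N : ℕ)
    (A B : ℓp →L[𝕜] V) (f : ℓp) :
    ‖(recStep δ)^[N] A f - (recStep δ)^[N] B f‖ ≤ ‖(A - B) ((tail 𝕜 ^ N) f)‖ := by
  induction N generalizing A B with
  | zero => rfl
  | succ N ih =>
    refine (ih (recStep δ A) (recStep δ B)).trans ?_
    have hstep : (recStep δ A - recStep δ B) ((tail 𝕜 ^ N) f)
        = δ (0, (A - B) ((tail 𝕜 ^ (N + 1)) f)) := by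
      rw [sub_apply, recStep_apply, recStep_apply, ← map_sub, Prod.mk_sub_mk,
        sub_self, pow_succ']
      rfl
    exact hstep ▸ hδ0 _

theorem tendsto_iterate_recStep_zero_apply (hp : p ≠ ∞) (hδ0 : ∀ v, ‖δ (0, v)‖ ≤ ‖v‖)
    {Θ : ℓp →L[𝕜] V} (hΘ : recStep δ Θ = Θ) (f : ℓp) :
    Tendsto (fun N => (recStep δ)^[N] 0 f) atTop (𝓝 (Θ f)) := by
  have htail := (tendsto_norm_tail_pow_apply (𝕜 := 𝕜) hp f).const_mul ‖Θ‖
  rw [mul_zero] at htail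
  refine tendsto_iff_norm_sub_tendsto_zero.2 <|
    squeeze_zero (fun _ => norm_nonneg _) (fun N => ?_) htail
  calc ‖(recStep δ)^[N] 0 f - Θ f‖ = ‖(recStep δ)^[N] Θ f - (recStep δ)^[N] 0 f‖ := by
        rw [Function.iterate_fixed hΘ, norm_sub_rev]
    _ ≤ ‖(Θ - 0) ((tail 𝕜 ^ N) f)‖ := norm_iterate_recStep_sub_apply_le δ hδ0 N Θ 0 f
    _ ≤ ‖Θ‖ * ‖(tail 𝕜 ^ N) f‖ := by
      rw [sub_zero]
      exact Θ.le_opNorm _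

theorem cauchySeq_iterate_recStep_zero_apply (hp : p ≠ ∞)
    (hδ : ∀ a : E × V, ‖δ a‖ ≤ (‖a.1‖ ^ p.toReal + ‖a.2‖ ^ p.toReal) ^ (1 / p.toReal))
    (f : ℓp) :
    CauchySeq fun N => (recStep δ)^[N] (0 : ℓp →L[𝕜] V) f := by
  refine cauchySeq_of_le_tendsto_0' (fun N => ‖(tail 𝕜 ^ N) f‖) (fun N M hNM => ?_)
    (tendsto_norm_tail_pow_apply hp f)
  obtain ⟨K, rfl⟩ := Nat.exists_eq_add_of_le hNM
  calc dist ((recStep δ)^[N] 0 f) ((recStep δ)^[N + K] 0 f)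
      = ‖(recStep δ)^[N] ((recStep δ)^[K] 0) f - (recStep δ)^[N] 0 f‖ := by
        rw [dist_eq_norm', Function.iterate_add_apply]
    _ ≤ ‖((recStep δ)^[K] 0 - 0) ((tail 𝕜 ^ N) f)‖ :=
        norm_iterate_recStep_sub_apply_le δ (norm_apply_zero_le δ hp hδ) N _ 0 f
    _ ≤ ‖(tail 𝕜 ^ N) f‖ := by
      rw [sub_zero]
      exact ((recStep δ)^[K] 0).le_of_opNorm_le (norm_iterate_recStep_zero_le_one δ hp hδ K) _
        |>.trans_eq (one_mul _)

theorem recStep_eq_of_tendsto {g : ℕ → ℓp →L[𝕜] V}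
    {Θ : ℓp →L[𝕜] V} (hg : ∀ N, g (N + 1) = recStep δ (g N))
    (hΘ : ∀ f, Tendsto (fun N => g N f) atTop (𝓝 (Θ f))) : recStep δ Θ = Θ := by
  ext f
  have hstep : Tendsto (fun N => recStep δ (g N) f) atTop (𝓝 (recStep δ Θ f)) :=
    (δ.continuous.tendsto _).comp (tendsto_const_nhds.prodMk_nhds (hΘ (tail 𝕜 f)))
  refine tendsto_nhds_unique ?_ ((hΘ f).comp (tendsto_add_atTop_nat 1))
  simpa only [Function.comp_def, hg] using hstep

theorem existsUnique_recStep_eq [CompleteSpace V] (hp : p ≠ ∞)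
    (hδ : ∀ a : E × V, ‖δ a‖ ≤ (‖a.1‖ ^ p.toReal + ‖a.2‖ ^ p.toReal) ^ (1 / p.toReal)) :
    ∃! Θ : ℓp →L[𝕜] V, ‖Θ‖ ≤ 1 ∧ recStep δ Θ = Θ := by
  let T : ℕ → ℓp →L[𝕜] V := fun N => (recStep δ)^[N] 0
  choose L hL using fun f =>
    cauchySeq_tendsto_of_complete (cauchySeq_iterate_recStep_zero_apply δ hp hδ f)
  let Θ : ℓp →L[𝕜] V :=
    (linearMapOfTendsto L (fun N => (T N : ℓp →ₗ[𝕜] V))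
      (tendsto_pi_nhds.2 hL)).mkContinuous 1 fun f => by
        rw [one_mul]
        exact le_of_tendsto' (hL f).norm fun N => (T N).le_of_opNorm_le
          (norm_iterate_recStep_zero_le_one δ hp hδ N) f |>.trans_eq (one_mul _)
  have hΘ : recStep δ Θ = Θ :=
    recStep_eq_of_tendsto δ (fun N => Function.iterate_succ_apply' _ N 0) hL
  refine ⟨Θ, ⟨LinearMap.mkContinuous_norm_le _ zero_le_one _, hΘ⟩, fun Θ' ⟨_, hΘ'⟩ => ?_⟩
  ext f
  exact tendsto_nhds_unique (tendsto_iterate_recStep_zero_apply δ hp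
    (norm_apply_zero_le δ hp hδ) hΘ' f) (hL f)

theorem forall_recurrence_iff_recStep_eq
    {γ : E × ℓp → ℓp}
    (hγ0 : ∀ ca, γ ca 0 = ca.1) (hγs : ∀ ca n, γ ca (n + 1) = ca.2 n)
    (Θ : ℓp →L[𝕜] V) :
    (∀ ca, Θ (γ ca) = δ (ca.1, Θ ca.2)) ↔ recStep δ Θ = Θ := by
  have htail : ∀ ca, tail 𝕜 (γ ca) = ca.2 := fun ca => lp.ext (funext (hγs ca))
  refine ⟨fun h => ContinuousLinearMap.ext fun f => ?_, fun h ca => ?_⟩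
  · rw [recStep_apply, ← h (f 0, tail 𝕜 f)]
    exact congrArg Θ (ext_head_tail (hγ0 _) (htail _))
  · calc Θ (γ ca) = recStep δ Θ (γ ca) := by rw [h]
      _ = δ (ca.1, Θ ca.2) := by rw [recStep_apply, hγ0, htail]

end Recursion

end lp

/-- universal property of `ℓ^p`, `1 ≤ p < ∞`: given a Banach space `V`
and a linear map `δ : 𝕜 ⊕ V → V` with `‖δ(c,v)‖ ≤ (|c|^p + ‖v‖^p)^{1/p}`, there is a
unique linear contraction `θ : ℓ^p → V` with `θ(c, a₀, a₁, …) = δ(c, θ(a₀, a₁, …))`. -/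
theorem stmt_11 {𝕜 V : Type*} [RCLike 𝕜] [NormedAddCommGroup V] [NormedSpace 𝕜 V]
    [CompleteSpace V]
    (p : ℝ≥0∞) [Fact (1 ≤ p)] (hp' : p ≠ ∞)
    (δ : 𝕜 × V →ₗ[𝕜] V)
    (hδ : ∀ a : 𝕜 × V, ‖δ a‖ ≤ (‖a.1‖ ^ p.toReal + ‖a.2‖ ^ p.toReal) ^ (1/p.toReal))
    (γ : 𝕜 × lp (fun _ : ℕ => 𝕜) p → lp (fun _ : ℕ => 𝕜) p)
    (hγ0 : ∀ ca : 𝕜 × lp (fun _ : ℕ => 𝕜) p, (γ ca : ℕ → 𝕜) 0 = ca.1)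
    (hγs : ∀ (ca : 𝕜 × lp (fun _ : ℕ => 𝕜) p) (n : ℕ),
      (γ ca : ℕ → 𝕜) (n + 1) = (ca.2 : ℕ → 𝕜) n) :
    ∃! θ : lp (fun _ : ℕ => 𝕜) p →L[𝕜] V, ‖θ‖ ≤ 1 ∧
      ∀ ca : 𝕜 × lp (fun _ : ℕ => 𝕜) p, θ (γ ca) = δ (ca.1, θ ca.2) := by
  have hp1 : 1 ≤ p.toReal := p.dichotomy.resolve_left hp'
  have hδ_le : ∀ a, ‖δ a‖ ≤ 2 * ‖a‖ := fun a => (hδ a).trans <|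
    (Real.rpow_add_rpow_le_add (norm_nonneg _) (norm_nonneg _) hp1).trans
      (by linarith [norm_fst_le a, norm_snd_le a])
  let δc := δ.mkContinuous 2 hδ_le
  have hrec := lp.forall_recurrence_iff_recStep_eq δc hγ0 hγs
  exact (existsUnique_congr fun θ => and_congr_right' (hrec θ)).2
    (lp.existsUnique_recStep_eq δc hp' hδ)
end

section
/- Let V be a Banach space and δ : 𝔽 ⊕ V → V a linear map with ‖δ(c,v)‖ ≤ max(|c|, ‖v‖) for all c ∈ 𝔽, v ∈ V. Then there exists a unique linear contraction θ : c₀ → V such that θ(c, a₀, a₁, …) = δ(c, θ(a₀, a₁, …)) for all c ∈ 𝔽 and (a₀,a₁,…) ∈ c₀. -/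
open ZeroAtInfty Filter Topology

namespace Stmt12

variable {𝕜 V : Type*} [RCLike 𝕜] [NormedAddCommGroup V] [NormedSpace 𝕜 V]

/-- tail: drop the first n coordinates -/
noncomputable def tail (n : ℕ) (f : C₀(ℕ, 𝕜)) : C₀(ℕ, 𝕜) :=
  ⟨⟨fun k => f (k + n), by continuity⟩, by
    have h := f.zero_at_infty'
    rw [cocompact_eq_atTop] at h ⊢
    exact h.comp (tendsto_add_atTop_nat n)⟩

@[simp] lemma tail_apply (n : ℕ) (f : C₀(ℕ, 𝕜)) (k : ℕ) : tail n f k = f (k + n) := rfl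

lemma coord_le_norm (f : C₀(ℕ, 𝕜)) (k : ℕ) : ‖f k‖ ≤ ‖f‖ := by
  rw [← ZeroAtInftyContinuousMap.norm_toBCF_eq_norm]
  exact f.toBCF.norm_coe_le_norm k

lemma norm_le_of_coord {f : C₀(ℕ, 𝕜)} {C : ℝ} (hC : 0 ≤ C) (h : ∀ k, ‖f k‖ ≤ C) : ‖f‖ ≤ C := by
  rw [← ZeroAtInftyContinuousMap.norm_toBCF_eq_norm]
  exact BoundedContinuousFunction.norm_le hC |>.mpr h

lemma tail_zero (f : C₀(ℕ, 𝕜)) : tail 0 f = f := by ext k; simp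

lemma tail_tail (n : ℕ) (f : C₀(ℕ, 𝕜)) : tail n (tail 1 f) = tail (n + 1) f := by
  ext k; simp [add_assoc]

lemma tail_norm_le (n : ℕ) (f : C₀(ℕ, 𝕜)) : ‖tail n f‖ ≤ ‖f‖ :=
  norm_le_of_coord (norm_nonneg f) (fun k => coord_le_norm f (k + n))

lemma tendsto_tail_norm (f : C₀(ℕ, 𝕜)) : Tendsto (fun n => ‖tail n f‖) atTop (𝓝 0) := by
  rw [NormedAddCommGroup.tendsto_nhds_zero]
  intro ε hε
  have h := f.zero_at_infty'
  rw [cocompact_eq_atTop, NormedAddCommGroup.tendsto_nhds_zero] at h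
  obtain ⟨N, hN⟩ := Filter.eventually_atTop.mp (h (ε / 2) (by positivity))
  filter_upwards [Filter.eventually_ge_atTop N] with n hn
  have h1 : ‖tail n f‖ ≤ ε / 2 :=
    norm_le_of_coord (by positivity) fun k => (hN (k + n) (le_add_self.trans (le_refl _) |>.trans' hn)).le
  calc ‖‖tail n f‖‖ = ‖tail n f‖ := by rw [Real.norm_eq_abs, abs_of_nonneg (norm_nonneg _)]
    _ ≤ ε / 2 := h1
    _ < ε := by linarith

variable (δ : 𝕜 × V →ₗ[𝕜] V)

noncomputable def T : ℕ → C₀(ℕ, 𝕜) → V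
  | 0, _ => 0
  | (n + 1), f => δ (f 0, T n (tail 1 f))

variable (hδ : ∀ a : 𝕜 × V, ‖δ a‖ ≤ max ‖a.1‖ ‖a.2‖)
include hδ

lemma T_norm_le (n : ℕ) (f : C₀(ℕ, 𝕜)) : ‖T δ n f‖ ≤ ‖f‖ := by
  induction n generalizing f with
  | zero => simp [T]
  | succ n ih =>
    calc ‖T δ (n+1) f‖ ≤ max ‖f 0‖ ‖T δ n (tail 1 f)‖ := hδ _
      _ ≤ ‖f‖ := max_le (coord_le_norm f 0) ((ih _).trans (tail_norm_le 1 f))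

omit hδ in
lemma T_add (n : ℕ) (f g : C₀(ℕ, 𝕜)) : T δ n (f + g) = T δ n f + T δ n g := by
  induction n generalizing f g with
  | zero => simp [T]
  | succ n ih =>
    have ht : tail 1 (f + g) = tail 1 f + tail 1 g := by ext k; simp
    simp only [T, ht, ih]
    rw [← map_add]
    rfl

omit hδ in
lemma T_smul (n : ℕ) (c : 𝕜) (f : C₀(ℕ, 𝕜)) : T δ n (c • f) = c • T δ n f := by
  induction n generalizing f with
  | zero => simp [T]
  | succ n ih =>
    have ht : tail 1 (c • f) = c • tail 1 f := by ext k; simp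
    simp only [T, ht, ih]
    rw [← map_smul]
    rfl

lemma T_diff (n m : ℕ) (f : C₀(ℕ, 𝕜)) : ‖T δ (n + m) f - T δ n f‖ ≤ ‖tail n f‖ := by
  induction n generalizing f with
  | zero => simpa [T, tail_zero] using T_norm_le δ hδ m f
  | succ n ih =>
    have h1 : n + 1 + m = (n + m) + 1 := by omega
    rw [h1]
    have h2 : T δ ((n+m)+1) f - T δ (n+1) f = δ (0, T δ (n+m) (tail 1 f) - T δ n (tail 1 f)) := by
      simp only [T]
      rw [← map_sub]
      congr 1
      simp [Prod.ext_iff]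
    rw [h2]
    calc ‖δ (0, T δ (n+m) (tail 1 f) - T δ n (tail 1 f))‖
        ≤ max ‖(0:𝕜)‖ ‖T δ (n+m) (tail 1 f) - T δ n (tail 1 f)‖ := hδ _
      _ ≤ ‖T δ (n+m) (tail 1 f) - T δ n (tail 1 f)‖ := by simp
      _ ≤ ‖tail n (tail 1 f)‖ := ih _
      _ = ‖tail (n+1) f‖ := by rw [tail_tail]


lemma T_cauchy (f : C₀(ℕ, 𝕜)) : CauchySeq (fun n => T δ n f) := by
  apply cauchySeq_of_le_tendsto_0 (fun N => 2 * ‖tail N f‖)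
  · intro n m N hn hm
    have key : ∀ k, N ≤ k → ‖T δ k f - T δ N f‖ ≤ ‖tail N f‖ := by
      intro k hk
      obtain ⟨m, rfl⟩ := Nat.exists_eq_add_of_le hk
      exact T_diff δ hδ N m f
    calc dist (T δ n f) (T δ m f) = ‖(T δ n f - T δ N f) - (T δ m f - T δ N f)‖ := by
          rw [dist_eq_norm, sub_sub_sub_cancel_right]
      _ ≤ ‖T δ n f - T δ N f‖ + ‖T δ m f - T δ N f‖ := norm_sub_le _ _
      _ ≤ 2 * ‖tail N f‖ := by linarith [key n hn, key m hm]
  · simpa using (tendsto_tail_norm f).const_mul 2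

variable [CompleteSpace V]

noncomputable def θfun (f : C₀(ℕ, 𝕜)) : V :=
  (cauchySeq_tendsto_of_complete (T_cauchy δ hδ f)).choose

lemma θ_tendsto (f : C₀(ℕ, 𝕜)) :
    Tendsto (fun n => T δ n f) atTop (𝓝 (θfun δ hδ f)) :=
  (cauchySeq_tendsto_of_complete (T_cauchy δ hδ f)).choose_spec

lemma θ_add (f g : C₀(ℕ, 𝕜)) : θfun δ hδ (f + g) = θfun δ hδ f + θfun δ hδ g := by
  refine tendsto_nhds_unique (θ_tendsto δ hδ (f + g)) ?_
  have := (θ_tendsto δ hδ f).add (θ_tendsto δ hδ g)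
  simpa only [T_add δ] using this

lemma θ_smul (c : 𝕜) (f : C₀(ℕ, 𝕜)) : θfun δ hδ (c • f) = c • θfun δ hδ f := by
  refine tendsto_nhds_unique (θ_tendsto δ hδ (c • f)) ?_
  have := (θ_tendsto δ hδ f).const_smul c
  simpa only [T_smul δ] using this

lemma θ_norm_le (f : C₀(ℕ, 𝕜)) : ‖θfun δ hδ f‖ ≤ ‖f‖ :=
  le_of_tendsto (θ_tendsto δ hδ f).norm (Filter.Eventually.of_forall fun n => T_norm_le δ hδ n f)

noncomputable def θL : C₀(ℕ, 𝕜) →L[𝕜] V :=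
  LinearMap.mkContinuous
    { toFun := θfun δ hδ
      map_add' := θ_add δ hδ
      map_smul' := θ_smul δ hδ } 1
    (fun f => by simpa using θ_norm_le δ hδ f)

lemma θL_norm_le : ‖θL δ hδ‖ ≤ 1 :=
  LinearMap.mkContinuous_norm_le _ zero_le_one _

omit hδ in
lemma delta_zero_left (c : 𝕜) (v w : V) : δ (c, v) - δ (c, w) = δ (0, v - w) := by
  rw [← map_sub]; congr 1; simp [Prod.ext_iff]

lemma delta_cont (c : 𝕜) : Continuous (fun v : V => δ (c, v)) := by
  have h : ∀ v : V, δ (c, v) = δ (c, 0) +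
      (LinearMap.mkContinuous (δ.comp (LinearMap.inr 𝕜 𝕜 V)) 1
        (fun v => by simpa using hδ (0, v))) v := by
    intro v
    simp only [LinearMap.mkContinuous_apply, LinearMap.comp_apply, LinearMap.inr_apply]
    rw [← map_add]
    congr 1
    simp
  rw [funext h]
  exact continuous_const.add (LinearMap.mkContinuous _ 1 _).continuous

end Stmt12


open Stmt12 in
/-- universal property of `c₀`: given a Banach space `V` and a linear
map `δ : 𝕜 ⊕ V → V` with `‖δ(c,v)‖ ≤ max(|c|, ‖v‖)`, there is a unique linear
contraction `θ : c₀ → V` with `θ(c, a₀, a₁, …) = δ(c, θ(a₀, a₁, …))`. -/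
theorem stmt_12 {𝕜 V : Type*} [RCLike 𝕜] [NormedAddCommGroup V] [NormedSpace 𝕜 V]
    [CompleteSpace V]
    (δ : 𝕜 × V →ₗ[𝕜] V)
    (hδ : ∀ a : 𝕜 × V, ‖δ a‖ ≤ max ‖a.1‖ ‖a.2‖)
    (γ : 𝕜 × C₀(ℕ, 𝕜) → C₀(ℕ, 𝕜))
    (hγ0 : ∀ ca : 𝕜 × C₀(ℕ, 𝕜), γ ca 0 = ca.1)
    (hγs : ∀ (ca : 𝕜 × C₀(ℕ, 𝕜)) (n : ℕ), γ ca (n + 1) = ca.2 n) :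
    ∃! θ : C₀(ℕ, 𝕜) →L[𝕜] V, ‖θ‖ ≤ 1 ∧
      ∀ ca : 𝕜 × C₀(ℕ, 𝕜), θ (γ ca) = δ (ca.1, θ ca.2) := by
  have θL_apply : ∀ f : C₀(ℕ, 𝕜), θL δ hδ f = θfun δ hδ f := fun f => rfl
  refine ⟨θL δ hδ, ⟨θL_norm_le δ hδ, ?_⟩, ?_⟩
  · intro ca
    have htail : tail 1 (γ ca) = ca.2 := by
      ext k; exact hγs ca k
    have h2 : ∀ n, T δ (n + 1) (γ ca) = δ (ca.1, T δ n ca.2) := by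
      intro n; simp only [T, hγ0 ca, htail]
    have h1 : Tendsto (fun n => δ (ca.1, T δ n ca.2)) atTop (𝓝 (θL δ hδ (γ ca))) := by
      have := (θ_tendsto δ hδ (γ ca)).comp (tendsto_add_atTop_nat 1)
      rw [θL_apply]
      refine this.congr fun n => ?_
      exact h2 n
    have h3 : Tendsto (fun n => δ (ca.1, T δ n ca.2)) atTop (𝓝 (δ (ca.1, θL δ hδ ca.2))) := by
      rw [θL_apply]
      exact ((delta_cont δ hδ ca.1).tendsto _).comp (θ_tendsto δ hδ ca.2)
    exact tendsto_nhds_unique h1 h3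
  · rintro θ' ⟨hn', he'⟩
    have key : ∀ (n : ℕ) (f : C₀(ℕ, 𝕜)), ‖θ' f - T δ n f‖ ≤ ‖tail n f‖ := by
      intro n
      induction n with
      | zero =>
        intro f
        rw [tail_zero]
        simpa [T] using (θ'.le_opNorm f).trans
          (mul_le_of_le_one_left (norm_nonneg f) hn')
      | succ n ih =>
        intro f
        have hf : γ (f 0, tail 1 f) = f := by
          ext k
          cases k with
          | zero => exact hγ0 _
          | succ m => exact hγs _ m
        have h4 : θ' f = δ (f 0, θ' (tail 1 f)) := by
          conv_lhs => rw [← hf]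
          exact he' (f 0, tail 1 f)
        have h5 : θ' f - T δ (n + 1) f = δ (0, θ' (tail 1 f) - T δ n (tail 1 f)) := by
          rw [h4]
          exact delta_zero_left δ _ _ _
        rw [h5]
        calc ‖δ (0, θ' (tail 1 f) - T δ n (tail 1 f))‖
            ≤ max ‖(0 : 𝕜)‖ ‖θ' (tail 1 f) - T δ n (tail 1 f)‖ := hδ _
          _ ≤ ‖θ' (tail 1 f) - T δ n (tail 1 f)‖ := by simp
          _ ≤ ‖tail n (tail 1 f)‖ := ih _
          _ = ‖tail (n + 1) f‖ := by rw [tail_tail]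
    ext f
    have h6 : Tendsto (fun n => θ' f - T δ n f) atTop (𝓝 0) :=
      squeeze_zero_norm (fun n => key n f) (tendsto_tail_norm f)
    have h7 : Tendsto (fun n => T δ n f) atTop (𝓝 (θ' f)) := by
      have := (tendsto_const_nhds (x := θ' f) (f := atTop)).sub h6
      simpa using this
    rw [θL_apply]
    exact tendsto_nhds_unique h7 (θ_tendsto δ hδ f)
end
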